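/- Fix ℓ, c, d ∈ ℕ. For every C²_{ℓ,c} formula φ with free variables among {x,y} there exist n ∈ ℕ, C²_{ℓ,c} formulas α₁(x),…,αₙ(x) with one free variable x, C²_{ℓ,c} formulas β₁(y),…,βₙ(y) with one free variable y, and formulas γ₁(x,y),…,γₙ(x,y), each of which is one of the five formulas E(x,y)∧E(y,x), E(x,y)∧¬E(y,x), ¬E(x,y)∧E(y,x), ¬E(x,y)∧¬E(y,x)∧x≠y, x=y, such that for every finite directed labelled graph G of dimension d and every assignment of x and y to nodes of G, φ holds if and only if the disjunction ⋁_{i=1}^{n} (α_i(x) ∧ β_i(y) ∧ γ_i(x,y)) holds. -/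

import Mathlib

/-- The two variables of the logic `C²`. -/
inductive C2Var : Type
  | x : C2Var
  | y : C2Var
deriving DecidableEq

/-- Formulas of `C²`, the two-variable fragment of first-order logic with counting, over
the signature with one binary relation symbol `E` and unary predicates `P₁,…,P_d`.
`exN k v φ` is the counting quantifier `∃_k v. φ` ("at least `k` elements"). -/
inductive C2 (d : ℕ) : Type
  | eq : C2Var → C2Var → C2 d
  | edge : C2Var → C2Var → C2 d
  | pred : Fin d → C2Var → C2 d
  | not : C2 d → C2 d
  | and : C2 d → C2 d → C2 d
  | or : C2 d → C2 d → C2 d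
  | exN : ℕ → C2Var → C2 d → C2 d

/-- Satisfaction of a `C²` formula in a finite directed labelled graph `(V, E, lab)`
under an assignment `a` of the two variables. -/
def C2.sat {d : ℕ} {V : Type} [Fintype V] (E : V → V → Prop) (lab : V → Fin d → Bool) :
    C2 d → (C2Var → V) → Prop
  | .eq s t, a => a s = a t
  | .edge s t, a => E (a s) (a t)
  | .pred i s, a => lab (a s) i = true
  | .not φ, a => ¬ C2.sat E lab φ a
  | .and φ ψ, a => C2.sat E lab φ a ∧ C2.sat E lab ψ a
  | .or φ ψ, a => C2.sat E lab φ a ∨ C2.sat E lab ψ a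
  | .exN k w φ, a => k ≤ Nat.card {u : V | C2.sat E lab φ (Function.update a w u)}

/-- Quantifier nesting depth of a `C²` formula. -/
def C2.depth {d : ℕ} : C2 d → ℕ
  | .eq _ _ => 0
  | .edge _ _ => 0
  | .pred _ _ => 0
  | .not φ => φ.depth
  | .and φ ψ => max φ.depth ψ.depth
  | .or φ ψ => max φ.depth ψ.depth
  | .exN _ _ φ => φ.depth + 1

/-- Counting rank of a `C²` formula: the maximal `k` occurring in a counting
quantifier `∃_k`. -/
def C2.rank {d : ℕ} : C2 d → ℕ
  | .eq _ _ => 0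
  | .edge _ _ => 0
  | .pred _ _ => 0
  | .not φ => φ.rank
  | .and φ ψ => max φ.rank ψ.rank
  | .or φ ψ => max φ.rank ψ.rank
  | .exN k _ φ => max k φ.rank

/-- Free variables of a `C²` formula. -/
def C2.freeVars {d : ℕ} : C2 d → Finset C2Var
  | .eq s t => {s, t}
  | .edge s t => {s, t}
  | .pred _ s => {s}
  | .not φ => φ.freeVars
  | .and φ ψ => φ.freeVars ∪ ψ.freeVars
  | .or φ ψ => φ.freeVars ∪ ψ.freeVars
  | .exN _ w φ => φ.freeVars.erase w

/-- `E(x,y) ∧ E(y,x)`. -/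
def gammaA (d : ℕ) : C2 d := .and (.edge .x .y) (.edge .y .x)
/-- `E(x,y) ∧ ¬E(y,x)`. -/
def gammaB (d : ℕ) : C2 d := .and (.edge .x .y) (.not (.edge .y .x))
/-- `¬E(x,y) ∧ E(y,x)`. -/
def gammaC (d : ℕ) : C2 d := .and (.not (.edge .x .y)) (.edge .y .x)
/-- `¬E(x,y) ∧ ¬E(y,x) ∧ x ≠ y`. -/
def gammaD (d : ℕ) : C2 d :=
  .and (.and (.not (.edge .x .y)) (.not (.edge .y .x))) (.not (.eq .x .y))
/-- `x = y`. -/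
def gammaE (d : ℕ) : C2 d := .eq .x .y

/-!
Once the atomic type of the pair `(x, y)` is fixed (which of `E(x,y)`, `E(y,x)`, `x = y` hold),
every atom mentioning both variables becomes a truth constant, and every quantified subformula
`∃_k x. ψ` or `∃_k y. ψ` has at most one free variable, since `C²` has only two. So under a fixed
atomic type `φ` is a Boolean combination of formulas in `x` alone and in `y` alone, hence a
disjunction of conjunctions `α(x) ∧ β(y)`; none of these steps increases depth or rank. An
irreflexive graph realizes exactly five atomic types, described by the formulas `γ`.
-/

namespace C2

variable {d : ℕ}

def top (v : C2Var) : C2 d := .eq v v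

@[simp]
lemma sat_top {V : Type} [Fintype V] (E : V → V → Prop) (lab : V → Fin d → Bool)
    (v : C2Var) (a : C2Var → V) : (top v : C2 d).sat E lab a := rfl

/-- The formulas of `C²_{m,r}` whose free variables are among `{v}`. -/
def IsUnaryIn (m r : ℕ) (v : C2Var) (α : C2 d) : Prop :=
  α.depth ≤ m ∧ α.rank ≤ r ∧ α.freeVars ⊆ {v}

namespace IsUnaryIn

variable {m r m' r' : ℕ} {v : C2Var} {α β : C2 d}

lemma mono (h : α.IsUnaryIn m r v) (hm : m ≤ m') (hr : r ≤ r') : α.IsUnaryIn m' r' v :=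
  ⟨h.1.trans hm, h.2.1.trans hr, h.2.2⟩

lemma top : (top v : C2 d).IsUnaryIn m r v :=
  ⟨Nat.zero_le _, Nat.zero_le _, by simp [C2.top, freeVars]⟩

lemma not (h : α.IsUnaryIn m r v) : α.not.IsUnaryIn m r v := h

lemma and (hα : α.IsUnaryIn m r v) (hβ : β.IsUnaryIn m r v) : (α.and β).IsUnaryIn m r v :=
  ⟨max_le hα.1 hβ.1, max_le hα.2.1 hβ.2.1, Finset.union_subset hα.2.2 hβ.2.2⟩

/-- `α` may be a sentence; `α ∧ v = v` has exactly the free variable `v`. -/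
lemma and_top (h : α.IsUnaryIn m r v) :
    (α.and (C2.top v)).depth ≤ m ∧ (α.and (C2.top v)).rank ≤ r ∧
      (α.and (C2.top v)).freeVars = {v} :=
  ⟨max_le h.1 (Nat.zero_le _), max_le h.2.1 (Nat.zero_le _), by
    rw [freeVars, show (C2.top v : C2 d).freeVars = {v} by simp [C2.top, freeVars]]
    exact Finset.union_eq_right.mpr h.2.2⟩

end IsUnaryIn

lemma isUnaryIn_exN_of_ne {k : ℕ} {w v : C2Var} (hwv : w ≠ v) (ψ : C2 d) :
    (exN k w ψ).IsUnaryIn (ψ.depth + 1) (max k ψ.rank) v := by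
  refine ⟨le_rfl, le_rfl, fun u hu => ?_⟩
  obtain ⟨huw, -⟩ := Finset.mem_erase.mp hu
  cases u <;> cases w <;> cases v <;> simp_all

section DNF

variable {V : Type} [Fintype V] (E : V → V → Prop) (lab : V → Fin d → Bool) (a : C2Var → V)

def SatDNF (L : List (C2 d × C2 d)) : Prop :=
  ∃ p ∈ L, p.1.sat E lab a ∧ p.2.sat E lab a

def dnfOfBool (b : Bool) : List (C2 d × C2 d) := if b then [(top .x, top .y)] else []

def dnfAnd (L M : List (C2 d × C2 d)) : List (C2 d × C2 d) :=
  L.flatMap fun p => M.map fun q => (p.1.and q.1, p.2.and q.2)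

/-- De Morgan: `¬(α ∧ β)` is `(¬α ∧ ⊤) ∨ (⊤ ∧ ¬β)`. -/
def dnfNot (L : List (C2 d × C2 d)) : List (C2 d × C2 d) :=
  L.foldr (fun p M => dnfAnd [(p.1.not, top .y), (top .x, p.2.not)] M) (dnfOfBool true)

@[simp]
lemma satDNF_ofBool (b : Bool) : SatDNF E lab a (dnfOfBool b : List (C2 d × C2 d)) ↔ b := by
  cases b <;> simp [SatDNF, dnfOfBool]

@[simp]
lemma satDNF_append (L M : List (C2 d × C2 d)) :
    SatDNF E lab a (L ++ M) ↔ SatDNF E lab a L ∨ SatDNF E lab a M := by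
  simp only [SatDNF, List.mem_append, or_and_right, exists_or]

@[simp]
lemma satDNF_and (L M : List (C2 d × C2 d)) :
    SatDNF E lab a (dnfAnd L M) ↔ SatDNF E lab a L ∧ SatDNF E lab a M := by
  simp only [SatDNF, dnfAnd, List.mem_flatMap, List.mem_map]
  constructor
  · rintro ⟨_, ⟨p, hp, q, hq, rfl⟩, ⟨hp₁, hq₁⟩, ⟨hp₂, hq₂⟩⟩
    exact ⟨⟨p, hp, hp₁, hp₂⟩, ⟨q, hq, hq₁, hq₂⟩⟩
  · rintro ⟨⟨p, hp, hp₁, hp₂⟩, ⟨q, hq, hq₁, hq₂⟩⟩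
    exact ⟨_, ⟨p, hp, q, hq, rfl⟩, ⟨hp₁, hq₁⟩, ⟨hp₂, hq₂⟩⟩

@[simp]
lemma satDNF_not (L : List (C2 d × C2 d)) :
    SatDNF E lab a (dnfNot L) ↔ ¬ SatDNF E lab a L := by
  induction L with
  | nil =>
    simp only [dnfNot, List.foldr_nil, satDNF_ofBool]
    simp [SatDNF]
  | cons p L ih =>
    have hp : SatDNF E lab a [(p.1.not, top .y), (top .x, p.2.not)] ↔
        ¬ (p.1.sat E lab a ∧ p.2.sat E lab a) := by
      simp only [SatDNF, List.mem_cons, List.not_mem_nil, exists_eq_or_imp, exists_eq_left,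
        or_false, sat, sat_top, and_true, true_and, not_and_or]
    simp only [dnfNot, List.foldr_cons] at ih ⊢
    rw [satDNF_and, hp, ih]
    simp [SatDNF, not_or]

end DNF

/-- The rectangle `α(x) ∧ β(y)` with `α, β` in `C²_{m,r}`. -/
def IsRect (m r : ℕ) (p : C2 d × C2 d) : Prop :=
  p.1.IsUnaryIn m r .x ∧ p.2.IsUnaryIn m r .y

section IsRect

variable {m r : ℕ} {p : C2 d × C2 d} {L M : List (C2 d × C2 d)}

lemma IsRect.mono {m' r' : ℕ} (h : IsRect m r p) (hm : m ≤ m') (hr : r ≤ r') :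
    IsRect m' r' p :=
  ⟨h.1.mono hm hr, h.2.mono hm hr⟩

lemma isRect_of_mem_dnfOfBool {b : Bool} (hp : p ∈ dnfOfBool b) : IsRect m r p := by
  cases b <;> simp only [dnfOfBool, Bool.false_eq_true, ↓reduceIte, List.not_mem_nil,
    List.mem_singleton] at hp
  exact hp ▸ ⟨IsUnaryIn.top, IsUnaryIn.top⟩

lemma isRect_of_mem_dnfAnd (hL : ∀ p ∈ L, IsRect m r p) (hM : ∀ p ∈ M, IsRect m r p)
    (hp : p ∈ dnfAnd L M) : IsRect m r p := by
  simp only [dnfAnd, List.mem_flatMap, List.mem_map] at hp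
  obtain ⟨p, hp, q, hq, rfl⟩ := hp
  exact ⟨(hL p hp).1.and (hM q hq).1, (hL p hp).2.and (hM q hq).2⟩

lemma isRect_of_mem_dnfNot (hL : ∀ p ∈ L, IsRect m r p) (hp : p ∈ dnfNot L) : IsRect m r p := by
  induction L generalizing p with
  | nil => exact isRect_of_mem_dnfOfBool (b := true) hp
  | cons q L ih =>
    obtain ⟨hq₁, hq₂⟩ := hL q List.mem_cons_self
    refine isRect_of_mem_dnfAnd (fun p hp => ?_)
      (fun p hp => ih (fun p hp => hL p (List.mem_cons_of_mem _ hp)) hp) hp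
    simp only [List.mem_cons, List.not_mem_nil, or_false] at hp
    rcases hp with rfl | rfl
    · exact ⟨hq₁.not, IsUnaryIn.top⟩
    · exact ⟨IsUnaryIn.top, hq₂.not⟩

end IsRect

/-- An atomic type of the pair `(x, y)`: the truth values of `E(x,y)`, `E(y,x)` and `x = y`. -/
structure CrossType where
  exy : Bool
  eyx : Bool
  eq : Bool

def CrossType.Realizes (τ : CrossType) {V : Type} (E : V → V → Prop) (a : C2Var → V) : Prop :=
  (E (a .x) (a .y) ↔ τ.exy) ∧ (E (a .y) (a .x) ↔ τ.eyx) ∧ (a .x = a .y ↔ τ.eq)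

/-- The DNF of `α(x) ∧ β(y)` rectangles equivalent to `φ` at pairs of atomic type `τ`. -/
def split (τ : CrossType) : C2 d → List (C2 d × C2 d)
  | .eq .x .x | .eq .y .y => dnfOfBool true
  | .eq .x .y | .eq .y .x => dnfOfBool τ.eq
  | .edge .x .x | .edge .y .y => dnfOfBool false -- `E` is irreflexive
  | .edge .x .y => dnfOfBool τ.exy
  | .edge .y .x => dnfOfBool τ.eyx
  | .pred i .x => [(.pred i .x, top .y)]
  | .pred i .y => [(top .x, .pred i .y)]
  | .not ψ => dnfNot (split τ ψ)
  | .and ψ χ => dnfAnd (split τ ψ) (split τ χ)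
  | .or ψ χ => split τ ψ ++ split τ χ
  | .exN k .x ψ => [(top .x, .exN k .x ψ)]
  | .exN k .y ψ => [(.exN k .y ψ, top .y)]

lemma isRect_of_mem_split (τ : CrossType) (φ : C2 d) :
    ∀ p ∈ split τ φ, IsRect φ.depth φ.rank p := by
  induction φ with
  | eq s t => cases s <;> cases t <;> exact fun p => isRect_of_mem_dnfOfBool
  | edge s t => cases s <;> cases t <;> exact fun p => isRect_of_mem_dnfOfBool
  | pred i s =>
    cases s <;> simp only [split, List.mem_singleton, forall_eq]
    · exact ⟨⟨le_rfl, le_rfl, by simp [freeVars]⟩, IsUnaryIn.top⟩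
    · exact ⟨IsUnaryIn.top, ⟨le_rfl, le_rfl, by simp [freeVars]⟩⟩
  | not ψ ih => exact fun p => isRect_of_mem_dnfNot ih
  | and ψ χ ihψ ihχ =>
    exact fun p => isRect_of_mem_dnfAnd
      (fun p hp => (ihψ p hp).mono (le_max_left _ _) (le_max_left _ _))
      (fun p hp => (ihχ p hp).mono (le_max_right _ _) (le_max_right _ _))
  | or ψ χ ihψ ihχ =>
    intro p hp
    rcases List.mem_append.mp hp with hp | hp
    · exact (ihψ p hp).mono (le_max_left _ _) (le_max_left _ _)
    · exact (ihχ p hp).mono (le_max_right _ _) (le_max_right _ _)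
  | exN k w ψ =>
    cases w <;> simp only [split, List.mem_singleton, forall_eq]
    · exact ⟨IsUnaryIn.top, isUnaryIn_exN_of_ne (by decide) ψ⟩
    · exact ⟨isUnaryIn_exN_of_ne (by decide) ψ, IsUnaryIn.top⟩

lemma sat_iff_satDNF_split {V : Type} [Fintype V] {E : V → V → Prop} (hirr : ∀ v, ¬ E v v)
    (lab : V → Fin d → Bool) {a : C2Var → V} {τ : CrossType} (hτ : τ.Realizes E a)
    (φ : C2 d) : φ.sat E lab a ↔ SatDNF E lab a (split τ φ) := by
  obtain ⟨hexy, heyx, heq⟩ := hτ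
  have heq' : a .y = a .x ↔ τ.eq := eq_comm.trans heq
  induction φ with
  | eq s t => cases s <;> cases t <;> simp [split, sat, heq, heq']
  | edge s t => cases s <;> cases t <;> simp [split, sat, hexy, heyx, hirr]
  | pred i s => cases s <;> simp [split, sat, SatDNF]
  | not ψ ih => simp [split, sat, ih]
  | and ψ χ ihψ ihχ => simp [split, sat, ihψ, ihχ]
  | or ψ χ ihψ ihχ => simp [split, sat, ihψ, ihχ]
  | exN k w ψ => cases w <;> simp [split, sat, SatDNF]

/-- The five atomic types realized in irreflexive graphs, each with the formula defining it. -/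
def crossTypes (d : ℕ) : List (C2 d × CrossType) :=
  [(gammaA d, ⟨true, true, false⟩), (gammaB d, ⟨true, false, false⟩),
    (gammaC d, ⟨false, true, false⟩), (gammaD d, ⟨false, false, false⟩),
    (gammaE d, ⟨false, false, true⟩)]

section CrossTypes

variable {V : Type} [Fintype V] {E : V → V → Prop} (lab : V → Fin d → Bool) {a : C2Var → V}

lemma exists_mem_crossTypes_sat : ∃ t ∈ crossTypes d, t.1.sat E lab a := by
  by_cases heq : a .x = a .y
  · exact ⟨(gammaE d, ⟨false, false, true⟩), by simp [crossTypes], heq⟩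
  by_cases hexy : E (a .x) (a .y) <;> by_cases heyx : E (a .y) (a .x)
  · exact ⟨(gammaA d, ⟨true, true, false⟩), by simp [crossTypes], hexy, heyx⟩
  · exact ⟨(gammaB d, ⟨true, false, false⟩), by simp [crossTypes], hexy, heyx⟩
  · exact ⟨(gammaC d, ⟨false, true, false⟩), by simp [crossTypes], hexy, heyx⟩
  · exact ⟨(gammaD d, ⟨false, false, false⟩), by simp [crossTypes], ⟨hexy, heyx⟩, heq⟩

lemma CrossType.realizes_of_sat (hirr : ∀ v, ¬ E v v) {t : C2 d × CrossType}
    (ht : t ∈ crossTypes d) (hsat : t.1.sat E lab a) : t.2.Realizes E a := by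
  have hx := hirr (a .x)
  simp only [crossTypes, List.mem_cons, List.not_mem_nil, or_false] at ht
  rcases ht with rfl | rfl | rfl | rfl | rfl <;>
    simp only [gammaA, gammaB, gammaC, gammaD, gammaE, sat] at hsat <;>
    simp only [CrossType.Realizes] <;> aesop

end CrossTypes

def decomposition (φ : C2 d) : List (C2 d × C2 d × C2 d) :=
  (crossTypes d).flatMap fun t => (split t.2 φ).map fun p => (p.1, p.2, t.1)

lemma mem_decomposition {φ : C2 d} {e : C2 d × C2 d × C2 d} :
    e ∈ decomposition φ ↔ ∃ t ∈ crossTypes d, ∃ p ∈ split t.2 φ, (p.1, p.2, t.1) = e := by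
  simp only [decomposition, List.mem_flatMap, List.mem_map]

lemma isRect_of_mem_decomposition {φ : C2 d} {e : C2 d × C2 d × C2 d}
    (he : e ∈ decomposition φ) : IsRect φ.depth φ.rank (e.1, e.2.1) := by
  obtain ⟨t, -, p, hp, rfl⟩ := mem_decomposition.mp he
  exact isRect_of_mem_split t.2 φ p hp

lemma gamma_of_mem_decomposition {φ : C2 d} {e : C2 d × C2 d × C2 d}
    (he : e ∈ decomposition φ) :
    e.2.2 = gammaA d ∨ e.2.2 = gammaB d ∨ e.2.2 = gammaC d ∨ e.2.2 = gammaD d ∨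
      e.2.2 = gammaE d := by
  obtain ⟨t, ht, -, -, rfl⟩ := mem_decomposition.mp he
  simp only [crossTypes, List.mem_cons, List.not_mem_nil, or_false] at ht
  rcases ht with rfl | rfl | rfl | rfl | rfl <;> simp

lemma sat_iff_exists_mem_decomposition {V : Type} [Fintype V] {E : V → V → Prop}
    (hirr : ∀ v, ¬ E v v) (lab : V → Fin d → Bool) (a : C2Var → V) (φ : C2 d) :
    φ.sat E lab a ↔
      ∃ e ∈ decomposition φ, e.1.sat E lab a ∧ e.2.1.sat E lab a ∧ e.2.2.sat E lab a := by
  constructor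
  · intro hφ
    obtain ⟨t, ht, hγ⟩ := exists_mem_crossTypes_sat (E := E) lab (a := a)
    obtain ⟨p, hp, hα, hβ⟩ :=
      (sat_iff_satDNF_split hirr lab (CrossType.realizes_of_sat lab hirr ht hγ) φ).mp hφ
    exact ⟨(p.1, p.2, t.1), mem_decomposition.mpr ⟨t, ht, p, hp, rfl⟩, hα, hβ, hγ⟩
  · rintro ⟨e, he, hα, hβ, hγ⟩
    obtain ⟨t, ht, p, hp, rfl⟩ := mem_decomposition.mp he
    exact (sat_iff_satDNF_split hirr lab (CrossType.realizes_of_sat lab hirr ht hγ) φ).mpr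
      ⟨p, hp, hα, hβ⟩

end C2

theorem stmt4_general (ℓ c d : ℕ) (φ : C2 d) (hdep : φ.depth ≤ ℓ) (hrk : φ.rank ≤ c) :
    ∃ (n : ℕ) (α β γ : Fin n → C2 d),
      (∀ i, (α i).depth ≤ ℓ ∧ (α i).rank ≤ c ∧ (α i).freeVars = {C2Var.x}) ∧
      (∀ i, (β i).depth ≤ ℓ ∧ (β i).rank ≤ c ∧ (β i).freeVars = {C2Var.y}) ∧
      (∀ i, γ i = gammaA d ∨ γ i = gammaB d ∨ γ i = gammaC d ∨ γ i = gammaD d ∨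
        γ i = gammaE d) ∧
      ∀ (V : Type) [Fintype V] (E : V → V → Prop), (∀ v, ¬ E v v) →
        ∀ (lab : V → Fin d → Bool) (a : C2Var → V),
          (C2.sat E lab φ a ↔
            ∃ i, C2.sat E lab (α i) a ∧ C2.sat E lab (β i) a ∧ C2.sat E lab (γ i) a) := by
  refine ⟨φ.decomposition.length, fun i => (φ.decomposition.get i).1.and (C2.top .x),
    fun i => (φ.decomposition.get i).2.1.and (C2.top .y), fun i => (φ.decomposition.get i).2.2,
    fun i => ?_, fun i => ?_, fun i => ?_, ?_⟩
  · exact ((C2.isRect_of_mem_decomposition (List.get_mem _ i)).1.mono hdep hrk).and_top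
  · exact ((C2.isRect_of_mem_decomposition (List.get_mem _ i)).2.mono hdep hrk).and_top
  · exact C2.gamma_of_mem_decomposition (List.get_mem _ i)
  · intro V _ E hirr lab a
    rw [C2.sat_iff_exists_mem_decomposition hirr lab, List.exists_mem_iff_get]
    simp only [C2.sat, C2.sat_top, and_true]

/-- every `C²_{ℓ,c}` formula is, over finite directed labelled graphs of
dimension `d`, equivalent to a finite disjunction `⋁ᵢ (αᵢ(x) ∧ βᵢ(y) ∧ γᵢ(x,y))` where the
`αᵢ`, `βᵢ` are `C²_{ℓ,c}` formulas in one free variable and each `γᵢ` is one of the five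
fixed formulas. -/
theorem stmt4 (ℓ c d : ℕ) (φ : C2 d) (hdep : φ.depth ≤ ℓ) (hrk : φ.rank ≤ c)
    (hfv : φ.freeVars ⊆ {C2Var.x, C2Var.y}) :
    ∃ (n : ℕ) (α β γ : Fin n → C2 d),
      (∀ i, (α i).depth ≤ ℓ ∧ (α i).rank ≤ c ∧ (α i).freeVars = {C2Var.x}) ∧
      (∀ i, (β i).depth ≤ ℓ ∧ (β i).rank ≤ c ∧ (β i).freeVars = {C2Var.y}) ∧
      (∀ i, γ i = gammaA d ∨ γ i = gammaB d ∨ γ i = gammaC d ∨ γ i = gammaD d ∨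
        γ i = gammaE d) ∧
      ∀ (V : Type) [Fintype V] (E : V → V → Prop), (∀ v, ¬ E v v) →
        ∀ (lab : V → Fin d → Bool) (a : C2Var → V),
          (C2.sat E lab φ a ↔
            ∃ i, C2.sat E lab (α i) a ∧ C2.sat E lab (β i) a ∧ C2.sat E lab (γ i) a) :=
  stmt4_general ℓ c d φ hdep hrk
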